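/- Let F₀ be a prime divisor on a log resolution f : Y → X of a pair (X, Δ+D) with D ∼_ℝ -(K_X+Δ) effective and big, and write -K_Y = f*(-(K_X+Δ+D)) + F. Suppose D ∼_ℝ A + B with A ample, B ≥ 0, let Γ = Δ + (1-ε)D + εB for small ε > 0, and let f*D = P + N be the divisorial Zariski decomposition with f*B ≥ N. If mult_{F₀} F = 1 and mult_{F₀}(-ε f*D + ε f*B + F) < 1, then mult_{F₀} P > 0 and consequently ā(F₀; X, Δ) = mult_{F₀} P - 1 > -1. -/

import Mathlib

/-- Key computation in the connectedness proof for `pNklt(X,Δ)`: with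
`mult_{F₀}(f*D) = mP + mN` (divisorial Zariski decomposition `f*D = P + N`),
`mN ≤ mB` (from `f*B ≥ N`), `mult_{F₀} F = 1`, and
`mult_{F₀}(-ε f*D + ε f*B + F) < 1`, one gets `mult_{F₀} P > 0` and hence
`ā(F₀;X,Δ) = mult_{F₀}P - 1 > -1`. -/
theorem stmt_19 (ε mP mN mB mD mF abar : ℝ)
    (hε : 0 < ε)
    (hmD : mD = mP + mN)
    (hB : mN ≤ mB)
    (hF : mF = 1)
    (hlt : -ε * mD + ε * mB + mF < 1)
    (habar : abar = mD - mF - mN) :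
    0 < mP ∧ abar = mP - 1 ∧ -1 < abar := by
  subst hmD hF habar
  have hεB : ε * mN ≤ ε * mB := mul_le_mul_of_nonneg_left hB hε.le
  have hP : 0 < mP := pos_of_mul_pos_right (by linarith : 0 < ε * mP) hε.le
  exact ⟨hP, by ring, by linarith⟩
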